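/- arXiv:1604.05989 — 8 statements merged into one kernel-verified Lean document; each statement's English description precedes it below -/
import Mathlib

section
/- For every integer n ≥ 1, every point x in the rectangular box B = {x ∈ ℝ^n : 0 ≤ x₁ ≤ b₁, |x₂| ≤ b₂, …, |xₙ| ≤ bₙ} (with all bᵢ > 0) can be written as x = λ₁a₁'' + … + λₙaₙ'' with |λᵢ| ≤ 2^(n−i) for i = 1, …, n, where a₁'' = (b₁, 0, …, 0) and for i = 2, …, n, aᵢ'' is any point of the form (b_{1i}, …, b_{ii}, 0, …, 0) satisfying 0 ≤ b_{1i} ≤ b₁, |b_{ji}| ≤ b_j for j = 2, …, i−1, and b_{ii} = bᵢ. -/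
noncomputable def boxLam (n : ℕ) (b : Fin n → ℝ) (a : Fin n → Fin n → ℝ)
    (x : Fin n → ℝ) : Fin n → ℝ
  | i => (x i - ∑ k ∈ (Finset.Ioi i).attach, boxLam n b a x k.1 * a k.1 i) / b i
termination_by i => n - (i : ℕ)
decreasing_by
  have h1 : i < k.1 := Finset.mem_Ioi.mp k.2
  have h1' : (i:ℕ) < (k.1:ℕ) := h1
  have h2 := k.1.2
  omega

theorem boxLam_spec (n : ℕ) (b : Fin n → ℝ) (a : Fin n → Fin n → ℝ)
    (x : Fin n → ℝ) (i : Fin n) (hbi : b i ≠ 0) :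
    boxLam n b a x i * b i = x i - ∑ k ∈ Finset.Ioi i, boxLam n b a x k * a k i := by
  rw [boxLam.eq_def]
  dsimp only
  rw [Finset.sum_attach _ (fun k => boxLam n b a x k * a k i),
    div_mul_cancel₀ _ hbi]

-- geometric sum
theorem geom_Ioi (n : ℕ) (i : Fin n) :
    ∑ k ∈ Finset.Ioi i, (2:ℝ) ^ (n - 1 - (k:ℕ)) = 2 ^ (n - 1 - (i:ℕ)) - 1 := by
  have hmap : (Finset.Ioi i).map Fin.valEmbedding = Finset.Ioo (i:ℕ) n := by
    ext m
    simp only [Finset.mem_map, Finset.mem_Ioi, Finset.mem_Ioo, Fin.valEmbedding_apply,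
      Fin.lt_def]
    constructor
    · rintro ⟨k, hk, rfl⟩; exact ⟨hk, k.2⟩
    · rintro ⟨h1, h2⟩; exact ⟨⟨m, h2⟩, h1, rfl⟩
  have := Finset.sum_map (Finset.Ioi i) Fin.valEmbedding (fun m => (2:ℝ) ^ (n - 1 - m))
  rw [hmap] at this
  rw [show (∑ k ∈ Finset.Ioi i, (2:ℝ) ^ (n - 1 - (k:ℕ))) = _ from this.symm]
  rw [show Finset.Ioo (i:ℕ) n = Finset.Ico ((i:ℕ)+1) n from rfl,
    Finset.sum_Ico_eq_sum_range]
  set M := n - 1 - (i:ℕ) with hM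
  have hi := i.2
  have hrange : n - ((i:ℕ)+1) = M := by omega
  rw [hrange]
  have hexp : ∀ j ∈ Finset.range M, (2:ℝ) ^ (n - 1 - ((i:ℕ)+1+j)) = 2 ^ (M - 1 - j) := by
    intro j hj; congr 1; omega
  rw [Finset.sum_congr rfl hexp, Finset.sum_range_reflect (fun j => (2:ℝ)^j) M]
  have : ∑ j ∈ Finset.range M, (2:ℝ)^j = 2^M - 1 := by
    have := geom_sum_eq (by norm_num : (2:ℝ) ≠ 1) M
    rw [this]; ring
  rw [this]

/-- Box lemma: every point of the box can be written as a combination of the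
`aᵢ''` with coefficients `|λᵢ| ≤ 2^(n-i)` (1-indexed). -/
theorem box_lemma (n : ℕ) (hn : 1 ≤ n) (b : Fin n → ℝ) (hb : ∀ i, 0 < b i)
    (a : Fin n → Fin n → ℝ)
    (hdiag : ∀ i, a i i = b i)
    (hfirst : ∀ i, 0 ≤ a i ⟨0, hn⟩ ∧ a i ⟨0, hn⟩ ≤ b ⟨0, hn⟩)
    (hmid : ∀ i j : Fin n, 0 < (j : ℕ) → j < i → |a i j| ≤ b j)
    (hzero : ∀ i j : Fin n, i < j → a i j = 0)
    (x : Fin n → ℝ)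
    (hx0 : 0 ≤ x ⟨0, hn⟩ ∧ x ⟨0, hn⟩ ≤ b ⟨0, hn⟩)
    (hxj : ∀ j : Fin n, 0 < (j : ℕ) → |x j| ≤ b j) :
    ∃ lam : Fin n → ℝ, (∀ i, |lam i| ≤ (2:ℝ) ^ (n - 1 - (i : ℕ))) ∧
      x = ∑ i, lam i • a i := by
  set lam := boxLam n b a x with hlam
  -- |x j| ≤ b j for all j, and |a i j| ≤ b j for j ≤ i
  have hxabs : ∀ j : Fin n, |x j| ≤ b j := by
    intro j
    rcases Nat.eq_zero_or_pos (j : ℕ) with h | h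
    · have hj : j = ⟨0, hn⟩ := Fin.ext h
      rw [hj, abs_le]
      exact ⟨by linarith [hx0.1, hb ⟨0, hn⟩, hx0.2], hx0.2⟩
    · exact hxj j h
  have haabs : ∀ i j : Fin n, j < i → |a i j| ≤ b j := by
    intro i j hji
    rcases Nat.eq_zero_or_pos (j : ℕ) with h | h
    · have hj : j = ⟨0, hn⟩ := Fin.ext h
      rw [hj, abs_le]
      exact ⟨by linarith [(hfirst i).1, hb ⟨0, hn⟩, (hfirst i).2], (hfirst i).2⟩
    · exact hmid i j h hji
  -- the bound, by downward strong induction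
  have key : ∀ m : ℕ, ∀ i : Fin n, n - (i : ℕ) ≤ m → |lam i| ≤ (2:ℝ) ^ (n - 1 - (i : ℕ)) := by
    intro m
    induction m with
    | zero => intro i h; exact absurd h (by have := i.2; omega)
    | succ m ih =>
      intro i _h
      have hbi := hb i
      have hspec := boxLam_spec n b a x i (ne_of_gt hbi)
      rw [← hlam] at hspec
      have hlami : lam i = (x i - ∑ k ∈ Finset.Ioi i, lam k * a k i) / b i := by
        field_simp at hspec ⊢
        linarith [hspec]
      rw [hlami, abs_div, abs_of_pos hbi, div_le_iff₀ hbi]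
      have hsum : |∑ k ∈ Finset.Ioi i, lam k * a k i|
          ≤ ∑ k ∈ Finset.Ioi i, (2:ℝ) ^ (n - 1 - (k : ℕ)) * b i := by
        refine (Finset.abs_sum_le_sum_abs _ _).trans (Finset.sum_le_sum ?_)
        intro k hk
        have hki : i < k := Finset.mem_Ioi.mp hk
        have h1 : |lam k| ≤ (2:ℝ) ^ (n - 1 - (k : ℕ)) := by
          refine ih k ?_
          have : (i:ℕ) < (k:ℕ) := hki
          have := k.2
          omega
        have h2 : |a k i| ≤ b i := haabs k i hki
        rw [abs_mul]
        exact mul_le_mul h1 h2 (abs_nonneg _) (by positivity)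
      have hgeo : ∑ k ∈ Finset.Ioi i, (2:ℝ) ^ (n - 1 - (k : ℕ)) * b i
          = ((2:ℝ) ^ (n - 1 - (i : ℕ)) - 1) * b i := by
        rw [← Finset.sum_mul, geom_Ioi]
      calc |x i - ∑ k ∈ Finset.Ioi i, lam k * a k i|
          ≤ |x i| + |∑ k ∈ Finset.Ioi i, lam k * a k i| := abs_sub _ _
        _ ≤ b i + ((2:ℝ) ^ (n - 1 - (i : ℕ)) - 1) * b i := by
            exact add_le_add (hxabs i) (hsum.trans (le_of_eq hgeo))
        _ = (2:ℝ) ^ (n - 1 - (i : ℕ)) * b i := by ring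
  refine ⟨lam, fun i => key (n - i) i le_rfl, ?_⟩
  funext j
  have hbj := hb j
  have hspec := boxLam_spec n b a x j (ne_of_gt hbj)
  rw [← hlam] at hspec
  have hzero' : ∀ i ∈ Finset.univ, i ∉ Finset.Ici j → lam i * a i j = 0 := by
    intro i _ hi
    rw [hzero i j (by simpa using hi), mul_zero]
  calc x j = lam j * b j + ∑ k ∈ Finset.Ioi j, lam k * a k j := by linarith [hspec]
    _ = lam j * a j j + ∑ k ∈ Finset.Ioi j, lam k * a k j := by rw [hdiag]
    _ = ∑ i ∈ Finset.Ici j, lam i * a i j := by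
        rw [show Finset.Ici j = insert j (Finset.Ioi j) from (Finset.Ioi_insert j).symm,
          Finset.sum_insert (by simp)]
    _ = ∑ i, lam i * a i j := Finset.sum_subset (Finset.subset_univ _) hzero'
    _ = (∑ i, lam i • a i) j := by simp [Finset.sum_apply]
end

section
/- For any finite set A = {a₁, …, a_k} of real numbers with k ≥ 3 that are not all equal, N(A) < 1, where N(A) is the infimum over all d with 0 < d ≤ diam(A) and all o ∈ ℝ of N_{d,o}(A) = (max_{1≤i≤k} |aᵢ − o − dℤ|)/d · (diam(A)/d)^{1/(k−2)}. -/
/-- Theorem 2.1 (maximum norm part): `N(A) < 1`. -/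
theorem N_lt_one (k : ℕ) (hk : 3 ≤ k) (a : Fin k → ℝ)
    (hne : ∃ i j, a i ≠ a j) :
    sInf {x : ℝ | ∃ d o : ℝ, 0 < d ∧ d ≤ (⨆ i, ⨆ j, |a i - a j|) ∧
      x = (⨆ i, ⨅ m : ℤ, |a i - o - (m : ℝ) * d|) / d *
        ((⨆ i, ⨆ j, |a i - a j|) / d) ^ ((1 : ℝ) / ((k : ℝ) - 2))} < 1 := by
  have hkpos : 0 < k := by omega
  haveI : NeZero k := ⟨by omega⟩
  set D : ℝ := ⨆ i, ⨆ j, |a i - a j| with hD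
  obtain ⟨i0, j0, hij⟩ := hne
  have hDpos : 0 < D := by
    have h1 : |a i0 - a j0| ≤ ⨆ j, |a i0 - a j| :=
      le_ciSup (f := fun j => |a i0 - a j|)
        (Set.Finite.bddAbove (Set.finite_range _)) j0
    have h2 : (⨆ j, |a i0 - a j|) ≤ D :=
      le_ciSup (f := fun i => ⨆ j, |a i - a j|)
        (Set.Finite.bddAbove (Set.finite_range _)) i0
    have h3 : 0 < |a i0 - a j0| := abs_pos.mpr (sub_ne_zero.mpr hij)
    linarith
  -- the candidate element with d = D, o = 0
  set S : ℝ := ⨆ i, ⨅ m : ℤ, |a i - 0 - (m : ℝ) * D| with hS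
  have hinf_le : ∀ i : Fin k, (⨅ m : ℤ, |a i - 0 - (m : ℝ) * D|) ≤ D / 2 := by
    intro i
    have hbdd : BddBelow (Set.range fun m : ℤ => |a i - 0 - (m : ℝ) * D|) :=
      ⟨0, by rintro x ⟨m, rfl⟩; exact abs_nonneg _⟩
    have := ciInf_le hbdd (round (a i / D))
    refine this.trans ?_
    have hround : |a i / D - round (a i / D)| ≤ 1 / 2 := abs_sub_round _
    have heq : a i - 0 - (round (a i / D) : ℝ) * D = D * (a i / D - round (a i / D)) := by
      field_simp; ring
    have : |a i - 0 - (round (a i / D) : ℝ) * D| = D * |a i / D - round (a i / D)| := by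
      rw [heq, abs_mul, abs_of_pos hDpos]
    rw [this]
    calc D * |a i / D - round (a i / D)| ≤ D * (1 / 2) := by
          exact mul_le_mul_of_nonneg_left hround hDpos.le
      _ = D / 2 := by ring
  have hSle : S ≤ D / 2 := ciSup_le hinf_le
  have hx : S / D * ((D / D) ^ ((1 : ℝ) / ((k : ℝ) - 2))) ∈
      {x : ℝ | ∃ d o : ℝ, 0 < d ∧ d ≤ D ∧
        x = (⨆ i, ⨅ m : ℤ, |a i - o - (m : ℝ) * d|) / d *
          ((D / d) ^ ((1 : ℝ) / ((k : ℝ) - 2)))} :=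
    ⟨D, 0, hDpos, le_refl D, rfl⟩
  have hxval : S / D * ((D / D) ^ ((1 : ℝ) / ((k : ℝ) - 2))) = S / D := by
    rw [div_self hDpos.ne', Real.one_rpow, mul_one]
  have hxlt : S / D * ((D / D) ^ ((1 : ℝ) / ((k : ℝ) - 2))) < 1 := by
    rw [hxval]
    have : S / D ≤ 1 / 2 := by
      rw [div_le_iff₀ hDpos]
      linarith
    linarith
  have hbddBelow : BddBelow {x : ℝ | ∃ d o : ℝ, 0 < d ∧ d ≤ D ∧
      x = (⨆ i, ⨅ m : ℤ, |a i - o - (m : ℝ) * d|) / d *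
        ((D / d) ^ ((1 : ℝ) / ((k : ℝ) - 2)))} := by
    refine ⟨0, ?_⟩
    rintro x ⟨d, o, hd, hdD, rfl⟩
    have hsup : 0 ≤ ⨆ i, ⨅ m : ℤ, |a i - o - (m : ℝ) * d| := by
      apply Real.iSup_nonneg
      intro i
      apply Real.iInf_nonneg
      intro m
      exact abs_nonneg _
    have : (0:ℝ) ≤ (D / d) ^ ((1 : ℝ) / ((k : ℝ) - 2)) :=
      Real.rpow_nonneg (div_nonneg (hDpos.le) hd.le) _
    exact mul_nonneg (div_nonneg hsup hd.le) this
  exact lt_of_le_of_lt (csInf_le hbddBelow hx) hxlt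
end

section
/- For any finite set A = {a₁, …, a_k} of distinct real numbers with k ≥ 3, N^{(2)}(A) < √(k−2), where N^{(2)}(A) is the infimum over all d with 0 < d ≤ diam(A) and all o ∈ ℝ of N^{(2)}_{d,o}(A) = (√(Σᵢ |aᵢ − o − dℤ|²))/d · (diam(A)/d)^{1/(k−2)}. -/
/-- Theorem 2.1 (square norm part): `N⁽²⁾(A) < √(k-2)`. -/
theorem N2_lt_sqrt (k : ℕ) (hk : 3 ≤ k) (a : Fin k → ℝ)
    (hinj : Function.Injective a) :
    sInf {x : ℝ | ∃ d o : ℝ, 0 < d ∧ d ≤ (⨆ i, ⨆ j, |a i - a j|) ∧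
      x = Real.sqrt (∑ i, (⨅ m : ℤ, |a i - o - (m : ℝ) * d|) ^ 2) / d *
        ((⨆ i, ⨆ j, |a i - a j|) / d) ^ ((1 : ℝ) / ((k : ℝ) - 2))}
      < Real.sqrt ((k : ℝ) - 2) := by
  have hkpos : 0 < k := by omega
  haveI : Nonempty (Fin k) := Fin.pos_iff_nonempty.mp hkpos
  set M := (⨆ i, ⨆ j, |a i - a j|) with hM
  have hbdd : ∀ i, BddAbove (Set.range fun j => |a i - a j|) :=
    fun i => (Set.finite_range _).bddAbove
  have hbdd2 : BddAbove (Set.range fun i => ⨆ j, |a i - a j|) :=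
    (Set.finite_range _).bddAbove
  have hMle : ∀ i j, |a i - a j| ≤ M := fun i j =>
    le_trans (le_ciSup (hbdd i) j) (le_ciSup hbdd2 i)
  set i₀ : Fin k := ⟨0, by omega⟩ with hi₀
  set i₁ : Fin k := ⟨1, by omega⟩ with hi₁
  have hMpos : 0 < M := by
    have hne : a i₀ ≠ a i₁ := fun h => absurd (hinj h) (by simp [hi₀, hi₁, Fin.ext_iff])
    have : 0 < |a i₀ - a i₁| := abs_pos.mpr (sub_ne_zero.mpr hne)
    exact lt_of_lt_of_le this (hMle i₀ i₁)
  -- the witness element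
  set g : Fin k → ℝ := fun i => ⨅ m : ℤ, |a i - a i₀ - (m : ℝ) * M| with hg
  have hgbdd : ∀ i, BddBelow (Set.range fun m : ℤ => |a i - a i₀ - (m : ℝ) * M|) :=
    fun i => ⟨0, by rintro x ⟨m, rfl⟩; exact abs_nonneg _⟩
  have hg0 : ∀ i, 0 ≤ g i := fun i => le_ciInf fun m => abs_nonneg _
  have hghalf : ∀ i, g i ≤ M / 2 := by
    intro i
    set x := a i - a i₀
    have := abs_sub_round (x / M)
    have key : |x - (round (x / M) : ℝ) * M| ≤ M / 2 := by
      have hMne : M ≠ 0 := ne_of_gt hMpos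
      have hx : x - (round (x / M) : ℝ) * M = M * (x / M - round (x / M)) := by
        field_simp
      rw [hx, abs_mul, abs_of_pos hMpos]
      calc M * |x / M - (round (x / M) : ℝ)| ≤ M * (1 / 2) := by
            exact mul_le_mul_of_nonneg_left this hMpos.le
        _ = M / 2 := by ring
    exact le_trans (ciInf_le (hgbdd i) (round (x / M))) key
  have hsum : (∑ i, (g i) ^ 2) ≤ (k : ℝ) * (M / 2) ^ 2 := by
    calc (∑ i, (g i) ^ 2) ≤ ∑ _i : Fin k, (M / 2) ^ 2 :=
          Finset.sum_le_sum fun i _ => pow_le_pow_left₀ (hg0 i) (hghalf i) 2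
      _ = (k : ℝ) * (M / 2) ^ 2 := by
          simp [Finset.sum_const, Finset.card_univ]
  have hsqrt : Real.sqrt (∑ i, (g i) ^ 2) ≤ Real.sqrt k * (M / 2) := by
    have : Real.sqrt ((k : ℝ) * (M / 2) ^ 2) = Real.sqrt k * (M / 2) := by
      rw [Real.sqrt_mul (Nat.cast_nonneg k), Real.sqrt_sq (by positivity)]
    calc Real.sqrt (∑ i, (g i) ^ 2) ≤ Real.sqrt ((k : ℝ) * (M / 2) ^ 2) :=
          Real.sqrt_le_sqrt hsum
      _ = Real.sqrt k * (M / 2) := this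
  set x₀ : ℝ := Real.sqrt (∑ i, (g i) ^ 2) / M * ((M / M) ^ ((1 : ℝ) / ((k : ℝ) - 2)))
    with hx₀
  have hmem : x₀ ∈ {x : ℝ | ∃ d o : ℝ, 0 < d ∧ d ≤ M ∧
      x = Real.sqrt (∑ i, (⨅ m : ℤ, |a i - o - (m : ℝ) * d|) ^ 2) / d *
        (M / d) ^ ((1 : ℝ) / ((k : ℝ) - 2))} :=
    ⟨M, a i₀, hMpos, le_refl M, rfl⟩
  have hbddbelow : BddBelow {x : ℝ | ∃ d o : ℝ, 0 < d ∧ d ≤ M ∧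
      x = Real.sqrt (∑ i, (⨅ m : ℤ, |a i - o - (m : ℝ) * d|) ^ 2) / d *
        (M / d) ^ ((1 : ℝ) / ((k : ℝ) - 2))} := by
    refine ⟨0, ?_⟩
    rintro x ⟨d, o, hd, hdM, rfl⟩
    have h1 : (0:ℝ) ≤ Real.sqrt (∑ i, (⨅ m : ℤ, |a i - o - (m : ℝ) * d|) ^ 2) / d :=
      div_nonneg (Real.sqrt_nonneg _) hd.le
    have h2 : (0:ℝ) ≤ (M / d) ^ ((1 : ℝ) / ((k : ℝ) - 2)) :=
      Real.rpow_nonneg (div_nonneg (hMpos.le) hd.le) _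
    exact mul_nonneg h1 h2
  have hx₀lt : x₀ < Real.sqrt ((k : ℝ) - 2) := by
    have hone : (M / M) ^ ((1 : ℝ) / ((k : ℝ) - 2)) = 1 := by
      rw [div_self (ne_of_gt hMpos), Real.one_rpow]
    have hle : x₀ ≤ Real.sqrt k / 2 := by
      rw [hx₀, hone, mul_one]
      rw [div_le_div_iff₀ hMpos (by norm_num : (0:ℝ) < 2)]
      calc Real.sqrt (∑ i, (g i) ^ 2) * 2 ≤ (Real.sqrt k * (M / 2)) * 2 := by
            exact mul_le_mul_of_nonneg_right hsqrt (by norm_num)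
        _ = Real.sqrt k * M := by ring
    refine lt_of_le_of_lt hle ?_
    rw [div_lt_iff₀ (by norm_num : (0:ℝ) < 2)] at *
    have hk3 : (3:ℝ) ≤ (k:ℝ) := by exact_mod_cast hk
    have : Real.sqrt k < Real.sqrt ((k:ℝ) - 2) * 2 := by
      have h4 : Real.sqrt 4 = 2 := by
        rw [show (4:ℝ) = 2 ^ 2 by norm_num, Real.sqrt_sq (by norm_num : (0:ℝ) ≤ 2)]
      rw [show Real.sqrt ((k:ℝ) - 2) * 2 = Real.sqrt (((k:ℝ) - 2) * 4) by
        rw [Real.sqrt_mul (by linarith), h4]]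
      exact Real.sqrt_lt_sqrt (Nat.cast_nonneg k) (by linarith)
    exact this
  exact lt_of_le_of_lt (csInf_le hbddbelow hmem) hx₀lt
end

section
/- Suppose for integers p₂, …, p_{k−1} and q ≥ 1 and a real ε ∈ (0,1) one has |pᵢ − q·αᵢ| ≤ ε for i = 2, …, k−1 and q ≤ 2^{(k−2)(k−1)/4}·ε^{−(k−2)}, where αᵢ = (aᵢ − a₁)/(a_k − a₁) for a set a₁ < … < a_k of reals with k ≥ 3. Then, setting d = (a_k − a₁)/q and o = a₁, one has N_{d,o}(A) ≤ 2^{(k−1)/4}, where N_{d,o}(A) = (max_{1≤i≤k} |aᵢ − o − dℤ|)/d · ((a_k−a₁)/d)^{1/(k−2)}. -/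
/-- Theorem 2.2 (maximum norm): from an LLL-quality simultaneous approximation
`|pᵢ - qαᵢ| ≤ ε`, `q ≤ 2^{(k-2)(k-1)/4} ε^{-(k-2)}`, the norm `N_{d,o}(A) ≤ 2^{(k-1)/4}`. -/
theorem lll_norm_bound (k : ℕ) (hk : 3 ≤ k) (a : Fin k → ℝ) (hmono : StrictMono a)
    (p : Fin k → ℤ) (q : ℕ) (hq : 1 ≤ q) (ε : ℝ) (hε0 : 0 < ε) (hε1 : ε < 1)
    (happ : ∀ i : Fin k, 0 < (i : ℕ) → (i : ℕ) < k - 1 →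
      |(p i : ℝ) - (q : ℝ) *
        ((a i - a ⟨0, by omega⟩) / (a ⟨k - 1, by omega⟩ - a ⟨0, by omega⟩))| ≤ ε)
    (hqb : (q : ℝ) ≤ 2 ^ (((k : ℝ) - 2) * ((k : ℝ) - 1) / 4) * ε ^ (-((k : ℝ) - 2)))
    (d o : ℝ) (hd : d = (a ⟨k - 1, by omega⟩ - a ⟨0, by omega⟩) / (q : ℝ))
    (ho : o = a ⟨0, by omega⟩) :
    (⨆ i : Fin k, ⨅ m : ℤ, |a i - o - (m : ℝ) * d|) / d *
      ((a ⟨k - 1, by omega⟩ - a ⟨0, by omega⟩) / d) ^ ((1 : ℝ) / ((k : ℝ) - 2))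
      ≤ 2 ^ (((k : ℝ) - 1) / 4) := by
  have i0 : Fin k := ⟨0, by omega⟩
  have hL : 0 < a ⟨k - 1, by omega⟩ - a ⟨0, by omega⟩ := by
    have : (⟨0, by omega⟩ : Fin k) < ⟨k - 1, by omega⟩ := by
      simp [Fin.lt_def]; omega
    exact sub_pos.2 (hmono this)
  have hq0 : (0:ℝ) < q := by exact_mod_cast hq
  have hdpos : 0 < d := by rw [hd]; positivity
  have hqd : (q:ℝ) * d = a ⟨k - 1, by omega⟩ - a ⟨0, by omega⟩ := by
    rw [hd]; field_simp
  have hbd : ∀ i : Fin k, BddBelow (Set.range fun m : ℤ => |a i - o - (m:ℝ)*d|) := fun i =>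
    ⟨0, by rintro x ⟨m, rfl⟩; positivity⟩
  haveI : Nonempty (Fin k) := ⟨⟨0, by omega⟩⟩
  have hsup : (⨆ i : Fin k, ⨅ m : ℤ, |a i - o - (m:ℝ)*d|) ≤ ε * d := by
    apply ciSup_le
    intro i
    rcases eq_or_ne (i:ℕ) 0 with h0 | h0
    · have hi : i = ⟨0, by omega⟩ := by ext; simpa using h0
      refine le_trans (ciInf_le (hbd i) 0) ?_
      rw [hi, ho]
      simp
      positivity
    · rcases eq_or_ne (i:ℕ) (k-1) with hk' | hk'
      · have hi : i = ⟨k - 1, by omega⟩ := by ext; simpa using hk'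
        refine le_trans (ciInf_le (hbd i) (q:ℤ)) ?_
        have h0 : a i - o - ((q:ℤ):ℝ)*d = 0 := by
          rw [hi, ho]; push_cast; rw [hqd]; ring
        rw [h0, abs_zero]; positivity
      · have h1 : 0 < (i:ℕ) := by omega
        have h2 : (i:ℕ) < k - 1 := by have := i.isLt; omega
        have happi := happ i h1 h2
        refine le_trans (ciInf_le (hbd i) (p i)) ?_
        have hdd : a i - o - ((p i : ℤ):ℝ) * d =
            -(((p i : ℤ):ℝ) - (q:ℝ) * ((a i - a ⟨0, by omega⟩) /
              (a ⟨k - 1, by omega⟩ - a ⟨0, by omega⟩))) * d := by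
          rw [ho, hd]; field_simp; ring
        rw [hdd, abs_mul, abs_neg, abs_of_pos hdpos]
        exact mul_le_mul_of_nonneg_right happi hdpos.le
  have hLd : (a ⟨k - 1, by omega⟩ - a ⟨0, by omega⟩)/d = (q:ℝ) := by
    rw [hd]; field_simp
  rw [hLd]
  have hk2 : (1:ℝ) ≤ (k:ℝ) - 2 := by
    have : (3:ℝ) ≤ (k:ℝ) := by exact_mod_cast hk
    linarith
  have hk2' : ((k:ℝ) - 2) ≠ 0 := by linarith
  have hqpow : (q:ℝ) ^ ((1:ℝ)/((k:ℝ)-2)) ≤ 2 ^ (((k:ℝ)-1)/4) * ε⁻¹ := by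
    have h1 : (q:ℝ) ^ ((1:ℝ)/((k:ℝ)-2)) ≤
        (2 ^ (((k:ℝ)-2)*((k:ℝ)-1)/4) * ε ^ (-((k:ℝ)-2))) ^ ((1:ℝ)/((k:ℝ)-2)) :=
      Real.rpow_le_rpow hq0.le hqb (by positivity)
    have h2 : (2 ^ (((k:ℝ)-2)*((k:ℝ)-1)/4) * ε ^ (-((k:ℝ)-2))) ^ ((1:ℝ)/((k:ℝ)-2))
        = 2 ^ (((k:ℝ)-1)/4) * ε⁻¹ := by
      rw [Real.mul_rpow (by positivity) (by positivity),
        ← Real.rpow_mul (by norm_num : (0:ℝ) ≤ 2), ← Real.rpow_mul hε0.le]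
      have e1 : ((k:ℝ)-2)*((k:ℝ)-1)/4*(1/((k:ℝ)-2)) = ((k:ℝ)-1)/4 := by
        field_simp
      have e2 : (-((k:ℝ)-2))*(1/((k:ℝ)-2)) = -1 := by field_simp
      rw [e1, e2, Real.rpow_neg_one]
    rwa [h2] at h1
  have hfst : (⨆ i : Fin k, ⨅ m : ℤ, |a i - o - (m:ℝ)*d|) / d ≤ ε :=
    (div_le_iff₀ hdpos).2 hsup
  have hfst0 : 0 ≤ (⨆ i : Fin k, ⨅ m : ℤ, |a i - o - (m:ℝ)*d|) / d := by
    apply div_nonneg _ hdpos.le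
    have := hbd ⟨0, by omega⟩
    refine le_ciSup_of_le (Finite.bddAbove_range _) ⟨0, by omega⟩ ?_
    exact le_ciInf fun m => abs_nonneg _
  calc (⨆ i : Fin k, ⨅ m : ℤ, |a i - o - (m:ℝ)*d|) / d * (q:ℝ) ^ ((1:ℝ)/((k:ℝ)-2))
      ≤ ε * (2 ^ (((k:ℝ)-1)/4) * ε⁻¹) :=
        mul_le_mul hfst hqpow (by positivity) hε0.le
    _ = 2 ^ (((k:ℝ)-1)/4) := by field_simp
end

section
/- Let a₁ = 0, a₂, …, a_{k−1}, a_k = 1 be elements of a real algebraic number field of degree k−1 with a₁ < a₂ < … < a_k such that a₂, …, a_{k−1}, 1 are linearly independent over ℚ. Then there exists a constant c₁ > 0, depending only on a₂, …, a_{k−1}, such that for all reals o and all d with 0 < d ≤ 1, N_{d,o}(A) > c₁; in fact one may take c₁ = γ/8 where γ is the constant from the badly-approximable property of {a₂, …, a_{k−1}}. -/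
/-!
Let `S` be the largest distance from an `aᵢ` to the progression `o + dℤ`, attained at `o + mᵢ d`.
Unless `S ≥ d / 8`, the integer `q = m_k - m_1` satisfies `|1 - q d| ≤ 2S`, so `1 ≤ q ≤ 2 / d`,
and `|q aᵢ - (mᵢ - m_1)| ≤ 4S / d` for all `i`. Cassels' bound `γ q^(-1/(k-2)) ≤ 4S / d` then gives
`S / d ≥ (γ / 8) d^(1/(k-2))`.

Cassels' bound comes from the trace-dual basis `b'` of the basis `(a₂, …, a_k)` of `F`: for an
integer vector `v` with `|q aᵢ - vᵢ| ≤ ε`, the element `x = ∑ vᵢ b'ᵢ` has its real conjugate of size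
`O(q)` and all other conjugates of size `O(ε)`, while `|N(x)|` is bounded below since the
denominators of the `b'ᵢ` are bounded. Hence `q ε^(k-2) ≫ 1`.
-/

open Finset

/-- `γ q^(-s) ≤ maxᵢ ‖q αᵢ‖` for every integer `q ≥ 1`, the maximum being replaced by an arbitrary
upper bound `ε` of the `|q αᵢ - vᵢ|`. -/
def BadlyApproximable {ι : Type*} (α : ι → ℝ) (s γ : ℝ) : Prop :=
  ∀ q : ℤ, 1 ≤ q → ∀ (v : ι → ℤ) (ε : ℝ), (∀ i, |q * α i - v i| ≤ ε) → γ * (q : ℝ) ^ (-s) ≤ ε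

theorem BadlyApproximable.of_comp {ι κ : Type*} {α : ι → ℝ} {f : κ → ι} {s γ : ℝ}
    (h : BadlyApproximable (α ∘ f) s γ) : BadlyApproximable α s γ :=
  fun q hq v ε hv => h q hq (v ∘ f) ε fun j => hv (f j)

section Embeddings

variable (K : Type*) {L : Type*} (E : Type*) [Field K] [Field L] [Algebra K L]
  [FiniteDimensional K L] [Algebra.IsSeparable K L] [Field E] [Algebra K E] [IsAlgClosed E]

open Classical in
theorem sum_embedding_mul_embedding_traceDual {ι : Type*} [Fintype ι]
    (b : Module.Basis ι K L) (σ τ : L →ₐ[K] E) :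
    ∑ i, σ (b i) * τ ((Algebra.traceForm K L).dualBasis (traceForm_nondegenerate K L) b i) =
      if σ = τ then 1 else 0 := by
  let b' := (Algebra.traceForm K L).dualBasis (traceForm_nondegenerate K L) b
  let e : (L →ₐ[K] E) ≃ ι :=
    Fintype.equivOfCardEq (by rw [AlgHom.card, Module.finrank_eq_card_basis b])
  let A : Matrix (L →ₐ[K] E) ι E := Matrix.of fun σ i => σ (b i)
  let B : Matrix ι (L →ₐ[K] E) E := Matrix.of fun i τ => τ (b' i)
  have hBA : B * A = 1 := by
    ext i j
    have h : Algebra.trace K L (b' i * b j) = if j = i then 1 else 0 :=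
      LinearMap.BilinForm.apply_dualBasis_left (traceForm_nondegenerate K L) b i j
    simp only [Matrix.mul_apply, A, B, Matrix.of_apply, ← map_mul, ← trace_eq_sum_embeddings, h,
      Matrix.one_apply]
    rcases eq_or_ne i j with rfl | hij
    · simp
    · simp [hij, hij.symm]
  simpa [Matrix.mul_apply, Matrix.one_apply, A, B] using
    congrFun (congrFun ((Matrix.mul_eq_one_comm_of_equiv e).2 hBA) σ) τ

end Embeddings

section Norm

variable {F : Type*} [Field F] [Algebra ℚ F] [FiniteDimensional ℚ F]

theorem one_le_abs_norm_of_isIntegral {x : F} (hx : x ≠ 0) (hint : IsIntegral ℤ x) :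
    1 ≤ |Algebra.norm ℚ x| := by
  obtain ⟨m, hm⟩ := IsIntegrallyClosed.isIntegral_iff.mp (Algebra.isIntegral_norm ℚ hint)
  have hm0 : m ≠ 0 := by
    rintro rfl
    exact Algebra.norm_ne_zero_iff.mpr hx (by rw [← hm, map_zero])
  rw [← hm, algebraMap_int_eq, eq_intCast]
  exact_mod_cast Int.one_le_abs hm0

theorem exists_pos_le_abs_norm_sum_zsmul {ι : Type*} [Fintype ι] (c : Module.Basis ι ℚ F) :
    ∃ c₀ > (0 : ℚ), ∀ v : ι → ℤ, v ≠ 0 → c₀ ≤ |Algebra.norm ℚ (∑ i, v i • c i)| := by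
  classical
  obtain ⟨w, hw0, hw⟩ := exists_integral_multiples ℤ ℚ (L := F) (univ.image c)
  refine ⟨1 / |(w : ℚ)| ^ Module.finrank ℚ F, by positivity, fun v hv => ?_⟩
  set x := ∑ i, v i • c i
  have hx : x ≠ 0 := by
    intro hx0
    apply hv
    funext i
    have := Fintype.linearIndependent_iff.mp c.linearIndependent (fun i => (v i : ℚ))
      (by simpa only [Int.cast_smul_eq_zsmul] using hx0) i
    exact_mod_cast this
  have hwx : w • x ≠ 0 := by
    rw [← Int.cast_smul_eq_zsmul ℚ]
    exact smul_ne_zero (Int.cast_ne_zero.2 hw0) hx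
  have hint : IsIntegral ℤ (w • x) := by
    simp only [x, smul_sum, smul_comm w (v _)]
    exact IsIntegral.sum _ fun i _ => (hw _ (mem_image_of_mem c (mem_univ i))).zsmul _
  have h1 := one_le_abs_norm_of_isIntegral hwx hint
  rw [← Int.cast_smul_eq_zsmul ℚ, Algebra.smul_def, map_mul, Algebra.norm_algebraMap, abs_mul,
    abs_pow] at h1
  rw [div_le_iff₀' (by positivity)]
  exact h1

end Norm

theorem rpow_mul_rpow_neg_le_of_le_mul_pow {c q ε : ℝ} {n : ℕ} (hn : n ≠ 0) (hc : 0 < c)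
    (hq : 0 < q) (hε : 0 ≤ ε) (h : c ≤ q * ε ^ n) :
    c ^ (1 / n : ℝ) * q ^ (-(1 / n : ℝ)) ≤ ε := by
  calc c ^ (1 / n : ℝ) * q ^ (-(1 / n : ℝ)) = (c / q) ^ (1 / n : ℝ) := by
        rw [Real.rpow_neg hq.le, ← div_eq_mul_inv, Real.div_rpow hc.le hq.le]
    _ ≤ (ε ^ n) ^ (1 / n : ℝ) := by
        gcongr
        rwa [div_le_iff₀' hq]
    _ = ε := by rw [one_div, Real.pow_rpow_inv_natCast hε hn]

theorem norm_sum_mul_le {R ι : Type*} [NormedRing R] [Fintype ι] {x m : ι → R} {ε : ℝ}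
    (hx : ∀ i, ‖x i‖ ≤ ε) : ‖∑ i, x i * m i‖ ≤ ε * ∑ i, ‖m i‖ := by
  rw [mul_sum]
  refine (norm_sum_le _ _).trans (sum_le_sum fun i _ => ?_)
  exact (norm_mul_le _ _).trans (mul_le_mul_of_nonneg_right (hx i) (norm_nonneg _))

theorem prod_le_mul_pow_of_le {J : Type*} [Fintype J] [DecidableEq J] {f : J → ℝ}
    (hf : ∀ τ, 0 ≤ f τ) {n : ℕ} (hJ : Fintype.card J = n + 1) {ρ : J} {A B : ℝ} (hρ : f ρ ≤ A)
    (hB : ∀ τ ≠ ρ, f τ ≤ B) : ∏ τ, f τ ≤ A * B ^ n := by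
  rw [Fintype.prod_eq_mul_prod_compl ρ]
  refine mul_le_mul hρ ?_ (prod_nonneg fun τ _ => hf τ) ((hf ρ).trans hρ)
  calc ∏ τ ∈ {ρ}ᶜ, f τ ≤ ∏ _τ ∈ ({ρ}ᶜ : Finset J), B :=
        prod_le_prod (fun τ _ => hf τ) fun τ hτ => hB τ (by simpa using hτ)
    _ = B ^ n := by rw [prod_const, card_compl, card_singleton, hJ, Nat.add_sub_cancel]

theorem le_two_mul_mul_pow_of_abs_sub_le {ι J : Type*} [Fintype ι] [Fintype J] [DecidableEq J]
    {M : J → ι → ℂ} {ρ : J} {α : ι → ℝ}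
    (hα : ∀ τ, ∑ i, (α i : ℂ) * M τ i = if ρ = τ then 1 else 0)
    {n : ℕ} (hJ : Fintype.card J = n + 1) {c₀ : ℝ}
    (hprod : ∀ v : ι → ℤ, v ≠ 0 → c₀ ≤ ∏ τ, ‖∑ i, (v i : ℂ) * M τ i‖)
    {C : ℝ} (hrow : ∀ τ, ∑ i, ‖M τ i‖ ≤ C) {q : ℤ} {v : ι → ℤ} {ε : ℝ} (hε : 0 ≤ ε)
    (hv : ∀ i, |q * α i - v i| ≤ ε) (hqε : C * ε < q) :
    c₀ ≤ 2 * q * (C * ε) ^ n := by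
  set E : J → ℂ := fun τ => ∑ i, ((q * α i - v i : ℝ) : ℂ) * M τ i
  have herr : ∀ τ, ‖E τ‖ ≤ C * ε := fun τ =>
    (norm_sum_mul_le fun i => by rw [Complex.norm_real, Real.norm_eq_abs]; exact hv i).trans <| by
      rw [mul_comm ε]; exact mul_le_mul_of_nonneg_right (hrow τ) hε
  have hL : ∀ τ, ∑ i, (v i : ℂ) * M τ i = (if ρ = τ then (q : ℂ) else 0) - E τ := by
    intro τ
    simp only [E, Complex.ofReal_sub, Complex.ofReal_mul, Complex.ofReal_intCast, sub_mul,
      sum_sub_distrib, mul_assoc, ← mul_sum, hα τ]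
    split_ifs <;> simp
  have hq : ‖(q : ℂ)‖ = q := by
    rw [Complex.norm_intCast, abs_of_pos (by linarith [(norm_nonneg _).trans (herr ρ)])]
  have hv0 : v ≠ 0 := by
    rintro rfl
    have h := hL ρ
    simp only [Pi.zero_apply, Int.cast_zero, zero_mul, sum_const_zero, ↓reduceIte] at h
    have := herr ρ
    rw [← sub_eq_zero.mp h.symm, hq] at this
    linarith
  refine (hprod v hv0).trans <| prod_le_mul_pow_of_le (fun _ => norm_nonneg _) hJ (ρ := ρ) ?_ ?_
  · rw [hL, if_pos rfl]
    refine (norm_sub_le _ _).trans ?_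
    linarith [herr ρ]
  · intro τ hτ
    rw [hL, if_neg hτ.symm, zero_sub, norm_neg]
    exact herr τ

theorem exists_badlyApproximable_of_le_prod {ι J : Type*} [Fintype ι] [Fintype J] [DecidableEq J]
    (M : J → ι → ℂ) (ρ : J) (α : ι → ℝ)
    (hα : ∀ τ, ∑ i, (α i : ℂ) * M τ i = if ρ = τ then 1 else 0)
    {n : ℕ} (hn : n ≠ 0) (hJ : Fintype.card J = n + 1) {c₀ : ℝ} (hc₀ : 0 < c₀)
    (hprod : ∀ v : ι → ℤ, v ≠ 0 → c₀ ≤ ∏ τ, ‖∑ i, (v i : ℂ) * M τ i‖) :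
    ∃ γ > 0, BadlyApproximable α (1 / n) γ := by
  obtain ⟨C, hC, hrow⟩ : ∃ C > 0, ∀ τ, ∑ i, ‖M τ i‖ ≤ C :=
    ⟨1 + ∑ τ, ∑ i, ‖M τ i‖, by positivity, fun τ => le_add_of_nonneg_of_le zero_le_one <|
      single_le_sum (f := fun τ => ∑ i, ‖M τ i‖) (fun _ _ => by positivity) (mem_univ τ)⟩
  refine ⟨min (1 / C) ((c₀ / (2 * C ^ n)) ^ (1 / n : ℝ)), by positivity, ?_⟩
  intro q hq v ε hv
  have hq1 : (1 : ℝ) ≤ q := by exact_mod_cast hq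
  have hε : 0 ≤ ε := by
    obtain ⟨i⟩ : Nonempty ι := by
      by_contra h
      simpa [not_nonempty_iff.mp h] using hα ρ
    exact (abs_nonneg _).trans (hv i)
  rcases le_or_gt (q : ℝ) (C * ε) with hqε | hqε
  · have hqs : (q : ℝ) ^ (-(1 / n : ℝ)) ≤ 1 :=
      Real.rpow_le_one_of_one_le_of_nonpos hq1 (by rw [neg_nonpos]; positivity)
    calc min (1 / C) ((c₀ / (2 * C ^ n)) ^ (1 / n : ℝ)) * (q : ℝ) ^ (-(1 / n : ℝ))
        ≤ 1 / C * 1 := mul_le_mul (min_le_left _ _) hqs (by positivity) (by positivity)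
      _ ≤ ε := by rw [mul_one, div_le_iff₀ hC]; linarith
  · have hprod' : c₀ / (2 * C ^ n) ≤ q * ε ^ n := by
      rw [div_le_iff₀ (by positivity)]
      calc c₀ ≤ 2 * q * (C * ε) ^ n := le_two_mul_mul_pow_of_abs_sub_le hα hJ hprod hrow hε hv hqε
        _ = q * ε ^ n * (2 * C ^ n) := by ring
    calc min (1 / C) ((c₀ / (2 * C ^ n)) ^ (1 / n : ℝ)) * (q : ℝ) ^ (-(1 / n : ℝ))
        ≤ (c₀ / (2 * C ^ n)) ^ (1 / n : ℝ) * (q : ℝ) ^ (-(1 / n : ℝ)) := by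
          gcongr; exact min_le_right _ _
      _ ≤ ε := rpow_mul_rpow_neg_le_of_le_mul_pow hn (by positivity) (by linarith) hε hprod'

theorem exists_badlyApproximable_of_basis {F : Type*} [Field F] [Algebra ℚ F]
    [FiniteDimensional ℚ F] (ρ : F →ₐ[ℚ] ℝ) {ι : Type*} [Fintype ι] (b : Module.Basis ι ℚ F)
    {n : ℕ} (hn : n ≠ 0) (hι : Fintype.card ι = n + 1) :
    ∃ γ > 0, BadlyApproximable (fun i => ρ (b i)) (1 / n) γ := by
  classical
  let b' := (Algebra.traceForm ℚ F).dualBasis (traceForm_nondegenerate ℚ F) b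
  let ρ' : F →ₐ[ℚ] ℂ := (Complex.ofRealAm.restrictScalars ℚ).comp ρ
  obtain ⟨c₀, hc₀, hnorm⟩ := exists_pos_le_abs_norm_sum_zsmul b'
  refine exists_badlyApproximable_of_le_prod (fun τ i => τ (b' i)) ρ' _ (fun τ => ?_) hn
    (by rw [AlgHom.card, Module.finrank_eq_card_basis b, hι]) (c₀ := c₀)
    (by exact_mod_cast hc₀) (fun v hv => ?_)
  · exact sum_embedding_mul_embedding_traceDual ℚ ℂ b ρ' τ
  · set x := ∑ i, v i • b' i
    have hx : ∀ τ : F →ₐ[ℚ] ℂ, τ x = ∑ i, (v i : ℂ) * τ (b' i) := by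
      simp only [x, map_sum, zsmul_eq_mul, map_mul, map_intCast, implies_true]
    calc (c₀ : ℝ) ≤ |((Algebra.norm ℚ x : ℚ) : ℝ)| := by exact_mod_cast hnorm v hv
      _ = ‖algebraMap ℚ ℂ (Algebra.norm ℚ x)‖ := by rw [eq_ratCast, Complex.norm_ratCast]
      _ = ∏ τ : F →ₐ[ℚ] ℂ, ‖∑ i, (v i : ℂ) * τ (b' i)‖ := by
        simp only [Algebra.norm_eq_prod_embeddings, norm_prod, hx]

theorem IntermediateField.exists_badlyApproximable_of_linearIndependent
    (F : IntermediateField ℚ ℝ) {ι : Type*} [Fintype ι] {α : ι → ℝ} (hα : LinearIndependent ℚ α)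
    (hαF : ∀ i, α i ∈ F) {n : ℕ} (hn : n ≠ 0) (hι : Fintype.card ι = n + 1)
    (hF : Module.finrank ℚ F = n + 1) : ∃ γ > 0, BadlyApproximable α (1 / n) γ := by
  have : FiniteDimensional ℚ F := Module.finite_of_finrank_pos (hF ▸ n.succ_pos)
  have : Nonempty ι := Fintype.card_pos_iff.mp (by omega)
  let b := basisOfLinearIndependentOfCardEqFinrank (b := fun i => (⟨α i, hαF i⟩ : F))
    (.of_comp F.val.toLinearMap hα) (hι.trans hF.symm)
  simpa [b] using exists_badlyApproximable_of_basis F.val b hn hι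

theorem abs_sub_round_div_mul_le (x : ℝ) {d : ℝ} (hd : 0 < d) (m : ℤ) :
    |x - ((round (x / d) : ℤ) : ℝ) * d| ≤ |x - m * d| := by
  have h (y : ℝ) : |x - y * d| = |x / d - y| * d := by
    rw [show x - y * d = (x / d - y) * d by field_simp, abs_mul, abs_of_pos hd]
  rw [h, h]
  exact mul_le_mul_of_nonneg_right (round_le (x / d) m) hd.le

theorem abs_mul_sub_le_of_abs_sub_le {x o d S : ℝ} {m m₀ m₁ : ℤ} (hx : x ∈ Set.Icc 0 1)
    (hd : 0 < d) (h : |x - o - m * d| ≤ S) (h₀ : |0 - o - m₀ * d| ≤ S)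
    (h₁ : |1 - o - m₁ * d| ≤ S) :
    |((m₁ - m₀ : ℤ) : ℝ) * x - (m - m₀ : ℤ)| ≤ 4 * S / d := by
  have key : (((m₁ - m₀ : ℤ) : ℝ) * x - (m - m₀ : ℤ)) * d =
      x * ((0 - o - m₀ * d) - (1 - o - m₁ * d)) + ((x - o - m * d) - (0 - o - m₀ * d)) := by
    push_cast; ring
  rw [le_div_iff₀ hd, show ∀ y : ℝ, |y| * d = |y * d| from fun y => by rw [abs_mul, abs_of_pos hd],
    key]
  calc |x * ((0 - o - m₀ * d) - (1 - o - m₁ * d)) + ((x - o - m * d) - (0 - o - m₀ * d))|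
      ≤ |x| * (S + S) + (S + S) := by
        refine (abs_add_le _ _).trans (add_le_add ?_ ((abs_sub _ _).trans (add_le_add h h₀)))
        rw [abs_mul]
        exact mul_le_mul_of_nonneg_left ((abs_sub _ _).trans (add_le_add h₀ h₁)) (abs_nonneg _)
    _ ≤ 4 * S := by
        rw [abs_of_nonneg hx.1]
        nlinarith [hx.2, (abs_nonneg _).trans h]

theorem rpow_div_two_le_rpow_neg {d q s : ℝ} (hd : 0 < d) (hq : 0 < q) (hqd : q ≤ 2 / d)
    (hs0 : 0 < s) (hs1 : s ≤ 1) : d ^ s / 2 ≤ q ^ (-s) := by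
  calc d ^ s / 2 ≤ d ^ s * (1 / 2) ^ s := by
        rw [div_eq_mul_one_div]
        gcongr
        simpa using Real.rpow_le_rpow_of_exponent_ge (by norm_num : (0 : ℝ) < 1 / 2)
          (by norm_num) hs1
    _ = (2 / d)⁻¹ ^ s := by rw [← Real.mul_rpow hd.le (by norm_num)]; congr 1; field_simp
    _ ≤ q⁻¹ ^ s := by gcongr
    _ = q ^ (-s) := by rw [Real.inv_rpow hq.le, Real.rpow_neg hq.le]

theorem le_div_mul_rpow_of_badlyApproximable {ι : Type*} {a : ι → ℝ}
    (ha : ∀ i, a i ∈ Set.Icc 0 1) {i₀ i₁ : ι} (h₀ : a i₀ = 0) (h₁ : a i₁ = 1) {s γ : ℝ}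
    (hs0 : 0 < s) (hs1 : s ≤ 1) (hγ0 : 0 ≤ γ) (hγ : BadlyApproximable a s γ) {o d S : ℝ}
    (hd0 : 0 < d) (hd1 : d ≤ 1) {m : ι → ℤ} (hm : ∀ i, |a i - o - m i * d| ≤ S)
    (hS : S < d / 8) : γ / 8 ≤ S / d * (1 / d) ^ s := by
  set q := m i₁ - m i₀
  have hm₀ := hm i₀
  have hm₁ := hm i₁
  rw [h₀] at hm₀
  rw [h₁] at hm₁
  have hqd : |1 - q * d| ≤ 2 * S := by
    rw [show 1 - (q : ℝ) * d = (1 - o - m i₁ * d) - (0 - o - m i₀ * d) by push_cast [q]; ring]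
    linarith [abs_sub (1 - o - m i₁ * d) (0 - o - m i₀ * d)]
  have hq1 : 1 ≤ q := by
    have : (0 : ℝ) < q * d := by linarith [(abs_le.mp hqd).2]
    exact_mod_cast (pos_of_mul_pos_left this hd0.le : (0 : ℝ) < q)
  have hq2 : (q : ℝ) ≤ 2 / d := by
    rw [le_div_iff₀ hd0]
    linarith [(abs_le.mp hqd).1]
  have happrox := hγ q hq1 (fun i => m i - m i₀) (4 * S / d) fun i =>
    abs_mul_sub_le_of_abs_sub_le (ha i) hd0 (hm i) hm₀ hm₁
  have hqs := rpow_div_two_le_rpow_neg hd0 (by exact_mod_cast hq1) hq2 hs0 hs1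
  have hds : d ^ s * (1 / d) ^ s = 1 := by
    rw [← Real.mul_rpow hd0.le (by positivity), mul_one_div_cancel hd0.ne', Real.one_rpow]
  calc γ / 8 = γ * (d ^ s / 2) / 4 * (1 / d) ^ s := by
        rw [show γ * (d ^ s / 2) / 4 * (1 / d) ^ s = γ / 8 * (d ^ s * (1 / d) ^ s) by ring, hds,
          mul_one]
    _ ≤ γ * (q : ℝ) ^ (-s) / 4 * (1 / d) ^ s := by gcongr
    _ ≤ 4 * S / d / 4 * (1 / d) ^ s := by gcongr
    _ = S / d * (1 / d) ^ s := by ring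

/-- The paper's `N_{d,o}(A)` is `latticeNorm a (1 / (k - 2)) d o`. -/
noncomputable def latticeNorm {ι : Type*} (a : ι → ℝ) (s d o : ℝ) : ℝ :=
  (⨆ i, ⨅ m : ℤ, |a i - o - (m : ℝ) * d|) / d * (1 / d) ^ s

theorem min_le_latticeNorm {ι : Type*} [Finite ι] {a : ι → ℝ}
    (ha : ∀ i, a i ∈ Set.Icc 0 1) {i₀ i₁ : ι} (h₀ : a i₀ = 0) (h₁ : a i₁ = 1) {s γ : ℝ}
    (hs0 : 0 < s) (hs1 : s ≤ 1) (hγ0 : 0 ≤ γ) (hγ : BadlyApproximable a s γ) {d : ℝ}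
    (hd0 : 0 < d) (hd1 : d ≤ 1) (o : ℝ) : min (1 / 8) (γ / 8) ≤ latticeNorm a s d o := by
  set S := ⨆ i, ⨅ m : ℤ, |a i - o - (m : ℝ) * d|
  have hm : ∀ i, |a i - o - ((round ((a i - o) / d) : ℤ) : ℝ) * d| ≤ S := fun i =>
    (le_ciInf fun m => abs_sub_round_div_mul_le _ hd0 m).trans
      (le_ciSup (f := fun i => ⨅ m : ℤ, |a i - o - (m : ℝ) * d|) (Set.finite_range _).bddAbove i)
  rcases lt_or_ge S (d / 8) with hS | hS
  · exact (min_le_right _ _).trans <|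
      le_div_mul_rpow_of_badlyApproximable ha h₀ h₁ hs0 hs1 hγ0 hγ hd0 hd1 hm hS
  · have hSd : 1 / 8 ≤ S / d := by rw [le_div_iff₀ hd0]; linarith
    have hd : 1 ≤ (1 / d) ^ s := Real.one_le_rpow (by rw [le_div_iff₀ hd0]; linarith) hs0.le
    calc min (1 / 8) (γ / 8) ≤ 1 / 8 * 1 := by rw [mul_one]; exact min_le_left _ _
      _ ≤ S / d * (1 / d) ^ s := mul_le_mul hSd hd zero_le_one (by linarith)

/-- Theorem 2.3: if `a₁ = 0 < a₂ < … < a_k = 1` lie in a real number field of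
degree `k-1` over `ℚ` and `a₂, …, a_{k-1}, 1` are `ℚ`-linearly independent, then
there is `c₁ > 0` with `N_{d,o}(A) > c₁` for all `o` and all `0 < d ≤ 1`. -/
theorem badly_approx_lower_bound (k : ℕ) (hk : 3 ≤ k) (a : Fin k → ℝ)
    (hmono : StrictMono a)
    (h0 : a ⟨0, by omega⟩ = 0) (h1 : a ⟨k - 1, by omega⟩ = 1)
    (F : IntermediateField ℚ ℝ) (hdeg : Module.finrank ℚ F = k - 1)
    (haF : ∀ i, a i ∈ F)
    (hind : LinearIndependent ℚ (fun i : {i : Fin k // (i : ℕ) ≠ 0} => a (i : Fin k))) :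
    ∃ c₁ > (0 : ℝ), ∀ o d : ℝ, 0 < d → d ≤ 1 →
      (⨆ i : Fin k, ⨅ m : ℤ, |a i - o - (m : ℝ) * d|) / d *
        ((1 : ℝ) / d) ^ ((1 : ℝ) / ((k : ℝ) - 2)) > c₁ := by
  have hι : Fintype.card {i : Fin k // (i : ℕ) ≠ 0} = k - 2 + 1 := by
    have : Fintype.card {i : Fin k // (i : ℕ) = 0} = 1 :=
      Fintype.card_eq_one_iff.2 ⟨⟨⟨0, by omega⟩, rfl⟩, fun i => Subtype.ext (Fin.ext i.2)⟩
    rw [Fintype.card_subtype_compl, Fintype.card_fin, this]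
    omega
  obtain ⟨γ, hγ0, hγ⟩ := F.exists_badlyApproximable_of_linearIndependent
    hind (fun i => haF i) (n := k - 2) (by omega) hι (by omega)
  rw [Nat.cast_sub (by omega), Nat.cast_two] at hγ
  have hk3 : (3 : ℝ) ≤ k := by exact_mod_cast hk
  have ha : ∀ i, a i ∈ Set.Icc 0 1 := fun i =>
    ⟨h0 ▸ hmono.monotone (Fin.le_iff_val_le_val.2 (Nat.zero_le _)),
      h1 ▸ hmono.monotone (Fin.le_iff_val_le_val.2 (Nat.le_sub_one_of_lt i.2))⟩
  refine ⟨min (1 / 8) (γ / 8) / 2, by positivity, fun o d hd0 hd1 => ?_⟩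
  have hN := min_le_latticeNorm ha h0 h1 (div_pos one_pos (by linarith))
    ((div_le_one (by linarith)).2 (by linarith)) hγ0.le hγ.of_comp hd0 hd1 o
  have hpos : 0 < min (1 / 8) (γ / 8) := by positivity
  unfold latticeNorm at hN
  linarith
end

section
/- Let k > 2 and a₁ < … < a_k be reals, and suppose real numbers d, o with 0 < d ≤ a_k − a₁ satisfy N_{d,o}(A) < c₂ for some constant c₂ > 0. Then there exists a positive integer q such that max_{2≤i≤k−1} ‖q·αᵢ‖ < 6·c₂·q^{−1/(k−2)} and |(a_k − a₁)/d − q| < 3·c₂·q^{−1/(k−2)}, where αᵢ = (aᵢ − a₁)/(a_k − a₁) and ‖·‖ denotes distance to the nearest integer. -/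
/-!
Normalise the points to `xᵢ = (aᵢ - o) / d`, so that every `xᵢ` lies within `ε = N / t^s` of
an integer `mᵢ`, where `t = x_k - x₁ ≥ 1` and `s = 1 / (k - 2)`. When `ε < 1/4`, take
`q = m_k - m₁`: then `|t - q| ≤ 2ε`, and for an interior point with `pᵢ = mᵢ - m₁ ∈ [0, q]`
the integer parts cancel in `q (xᵢ - x₁) - pᵢ (x_k - x₁)`, which is therefore at most `2qε`
in absolute value; dividing by `t` gives `‖q αᵢ‖ ≤ 2qε / t ≤ 3ε`. When `ε ≥ 1/4` the trivial
choice `q = round t` already works. In both cases `q ≤ 3t/2`, which turns these bounds in `ε`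
into the claimed bounds in `c₂ q^{-s}`.
-/

open Real

lemma rpow_le_mul_rpow_of_le_mul {x y b s : ℝ} (hx : 0 ≤ x) (hy : 0 ≤ y) (hb : 1 ≤ b)
    (hs0 : 0 ≤ s) (hs1 : s ≤ 1) (hxy : x ≤ b * y) : x ^ s ≤ b * y ^ s :=
  calc x ^ s ≤ (b * y) ^ s := rpow_le_rpow hx hxy hs0
    _ = b ^ s * y ^ s := mul_rpow (by linarith) hy
    _ ≤ b * y ^ s := by
      gcongr
      simpa using rpow_le_rpow_of_exponent_le hb hs1

lemma lt_mul_rpow_neg_of_le_mul {X b ε t q s c : ℝ} (hX : X ≤ 2 * b * ε) (hb : 0 < b)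
    (hε : 0 ≤ ε) (hq : 0 < q) (hqt : q ≤ 3 / 2 * t) (hs0 : 0 ≤ s) (hs1 : s ≤ 1)
    (hc : ε * t ^ s < c) : X < 3 * b * c * q ^ (-s) := by
  rw [rpow_neg hq.le, ← div_eq_mul_inv, lt_div_iff₀ (rpow_pos_of_pos hq s)]
  have ht : 0 ≤ t := by linarith
  calc X * q ^ s ≤ 2 * b * ε * (3 / 2 * t ^ s) := by
        gcongr
        exact rpow_le_mul_rpow_of_le_mul hq.le ht (by norm_num) hs0 hs1 hqt
    _ = 3 * b * (ε * t ^ s) := by ring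
    _ < 3 * b * c := by gcongr

lemma abs_div_sub_round_mul_le (y : ℝ) {d : ℝ} (hd : 0 < d) (m : ℤ) :
    |y / d - round (y / d)| * d ≤ |y - m * d| :=
  calc |y / d - round (y / d)| * d ≤ |y / d - m| * d :=
      mul_le_mul_of_nonneg_right (round_le _ _) hd.le
    _ = |(y / d - m) * d| := by rw [abs_mul, abs_of_pos hd]
    _ = |y - m * d| := by rw [sub_mul, div_mul_cancel₀ _ hd.ne']

lemma abs_div_sub_round_le_iSup {ι : Type*} [Finite ι] (a : ι → ℝ) (o : ℝ) {d : ℝ}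
    (hd : 0 < d) (i : ι) :
    |(a i - o) / d - round ((a i - o) / d)| ≤ (⨆ j, ⨅ m : ℤ, |a j - o - m * d|) / d := by
  rw [le_div_iff₀ hd]
  calc _ ≤ ⨅ m : ℤ, |a i - o - m * d| := le_ciInf (abs_div_sub_round_mul_le _ hd)
    _ ≤ _ := le_ciSup (f := fun j => ⨅ m : ℤ, |a j - o - m * d|)
      (Set.finite_range _).bddAbove i

lemma abs_mul_sub_mul_le_of_near_int {x y z ε : ℝ} {m p q : ℤ} (hx : |x - m| ≤ ε)
    (hy : |y - (m + p)| ≤ ε) (hz : |z - (m + q)| ≤ ε) (hp : 0 ≤ p) (hpq : p ≤ q) :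
    |q * (y - x) - p * (z - x)| ≤ 2 * q * ε := by
  have hp' : (0 : ℝ) ≤ p := by exact_mod_cast hp
  have hpq' : (p : ℝ) ≤ q := by exact_mod_cast hpq
  rw [show (q : ℝ) * (y - x) - p * (z - x) =
      q * (y - (m + p)) - p * (z - (m + q)) - (q - p) * (x - m) by ring]
  rw [abs_le] at *
  constructor <;> nlinarith

section

variable {ι : Type*} (x : ι → ℝ) (l r : ι) (ε : ℝ)

def GoodDenominator (q : ℤ) : Prop :=
  1 ≤ q ∧ (q : ℝ) ≤ 3 / 2 * (x r - x l) ∧ |x r - x l - q| ≤ 2 * ε ∧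
    ∀ i, x l < x i → x i < x r →
      |q * ((x i - x l) / (x r - x l)) - round (q * ((x i - x l) / (x r - x l)))| ≤ 4 * ε

variable {x l r ε}

lemma goodDenominator_round (ht : 1 ≤ x r - x l) (hε : 1 / 4 ≤ ε) :
    GoodDenominator x l r ε (round (x r - x l)) := by
  have hround := abs_sub_round (x r - x l)
  have h := abs_le.1 hround
  have hq : (0 : ℝ) < round (x r - x l) := by linarith
  refine ⟨by exact_mod_cast hq, by linarith, by linarith, fun i _ _ => ?_⟩
  linarith [abs_sub_round ((round (x r - x l) : ℝ) * ((x i - x l) / (x r - x l)))]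

lemma goodDenominator_round_sub_round (ht : 1 ≤ x r - x l)
    (hε : ∀ i, |x i - round (x i)| ≤ ε) (hε4 : ε < 1 / 4) :
    GoodDenominator x l r ε (round (x r) - round (x l)) := by
  set t := x r - x l
  set q := round (x r) - round (x l)
  have hl := abs_le.1 (hε l)
  have hr := abs_le.1 (hε r)
  have htq : |t - q| ≤ 2 * ε := by
    simp only [t, q, Int.cast_sub]; rw [abs_le]; constructor <;> linarith
  have hq : (0 : ℝ) < q := by linarith [(abs_le.1 htq).2]
  have hqt : (q : ℝ) ≤ 3 / 2 * t := by linarith [(abs_le.1 htq).1]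
  refine ⟨by exact_mod_cast hq, hqt, htq, fun i hli hir => ?_⟩
  set p := round (x i) - round (x l)
  have hi := abs_le.1 (hε i)
  have hp : 0 ≤ p := by
    have : (-1 : ℝ) < p := by simp only [p, Int.cast_sub]; linarith
    have : (-1 : ℤ) < p := by exact_mod_cast this
    omega
  have hpq : p ≤ q := by
    have : (p : ℝ) < q + 1 := by simp only [p, q, Int.cast_sub]; linarith
    have : p < q + 1 := by exact_mod_cast this
    omega
  have hcancel := abs_mul_sub_mul_le_of_near_int (x := x l) (y := x i) (z := x r)
    (m := round (x l)) (by simpa using hε l) (by simpa [p] using hε i)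
    (by simpa [q] using hε r) hp hpq
  have htpos : 0 < t := by linarith
  calc _ ≤ |q * ((x i - x l) / t) - p| := round_le _ _
    _ = |(q * (x i - x l) - p * t) / t| := by congr 1; field_simp
    _ = |q * (x i - x l) - p * t| / t := by rw [abs_div, abs_of_pos htpos]
    _ ≤ 2 * q * ε / t := by gcongr
    _ ≤ 4 * ε := by
      rw [div_le_iff₀ htpos]
      nlinarith [(abs_nonneg _).trans (hε l)]

lemma exists_goodDenominator (ht : 1 ≤ x r - x l) (hε : ∀ i, |x i - round (x i)| ≤ ε) :
    ∃ q, GoodDenominator x l r ε q := by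
  rcases lt_or_ge ε (1 / 4) with hε4 | hε4
  · exact ⟨_, goodDenominator_round_sub_round ht hε hε4⟩
  · exact ⟨_, goodDenominator_round ht hε4⟩

theorem exists_nat_abs_mul_sub_round_lt {s c : ℝ} (hs0 : 0 ≤ s) (hs1 : s ≤ 1)
    (ht : 1 ≤ x r - x l) (hε : ∀ i, |x i - round (x i)| ≤ ε) (hc : ε * (x r - x l) ^ s < c) :
    ∃ q : ℕ, 0 < q ∧
      (∀ i, x l < x i → x i < x r →
        |(q : ℝ) * ((x i - x l) / (x r - x l)) - round ((q : ℝ) * ((x i - x l) / (x r - x l)))| <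
          6 * c * (q : ℝ) ^ (-s)) ∧
      |x r - x l - q| < 3 * c * (q : ℝ) ^ (-s) := by
  obtain ⟨q, hq1, hqt, htq, hα⟩ := exists_goodDenominator ht hε
  lift q to ℕ using by omega
  have hε0 : 0 ≤ ε := (abs_nonneg _).trans (hε l)
  have hq : (0 : ℝ) < q := by exact_mod_cast hq1
  push_cast at hqt htq hα
  refine ⟨q, by exact_mod_cast hq1, fun i hli hir => ?_, ?_⟩
  · have := lt_mul_rpow_neg_of_le_mul (b := 2) ((hα i hli hir).trans_eq (by ring)) two_pos
      hε0 hq hqt hs0 hs1 hc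
    linarith
  · simpa using lt_mul_rpow_neg_of_le_mul (b := 1) (by linarith) one_pos hε0 hq hqt hs0 hs1 hc

end

/-- Theorem 2.4: a very good inhomogeneous approximating lattice `o + dℤ` yields a
good homogeneous simultaneous Diophantine approximation with denominator `q`. -/
theorem inhom_to_hom (k : ℕ) (hk : 2 < k) (a : Fin k → ℝ) (hmono : StrictMono a)
    (d o c₂ : ℝ) (hd : 0 < d)
    (hd1 : d ≤ a ⟨k - 1, by omega⟩ - a ⟨0, by omega⟩)
    (hN : (⨆ i : Fin k, ⨅ m : ℤ, |a i - o - (m : ℝ) * d|) / d *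
      ((a ⟨k - 1, by omega⟩ - a ⟨0, by omega⟩) / d) ^ ((1 : ℝ) / ((k : ℝ) - 2)) < c₂) :
    ∃ q : ℕ, 0 < q ∧
      (∀ i : Fin k, 0 < (i : ℕ) → (i : ℕ) < k - 1 →
        |(q : ℝ) * ((a i - a ⟨0, by omega⟩) / (a ⟨k - 1, by omega⟩ - a ⟨0, by omega⟩)) -
          round ((q : ℝ) * ((a i - a ⟨0, by omega⟩) /
            (a ⟨k - 1, by omega⟩ - a ⟨0, by omega⟩)))| <
          6 * c₂ * (q : ℝ) ^ (-(1 : ℝ) / ((k : ℝ) - 2))) ∧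
      |(a ⟨k - 1, by omega⟩ - a ⟨0, by omega⟩) / d - (q : ℝ)| <
        3 * c₂ * (q : ℝ) ^ (-(1 : ℝ) / ((k : ℝ) - 2)) := by
  set l : Fin k := ⟨0, by omega⟩
  set r : Fin k := ⟨k - 1, by omega⟩
  set x : Fin k → ℝ := fun i => (a i - o) / d
  have hsub : ∀ i j, x i - x j = (a i - a j) / d := fun i j => by simp only [x]; ring
  have hα : ∀ i, (x i - x l) / (x r - x l) = (a i - a l) / (a r - a l) := fun i => by
    rw [hsub, hsub, div_div_div_cancel_right₀ hd.ne']
  have hk3 : (3 : ℝ) ≤ k := by exact_mod_cast hk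
  obtain ⟨q, hq, hint, hend⟩ := exists_nat_abs_mul_sub_round_lt (x := x) (l := l) (r := r)
    (s := 1 / ((k : ℝ) - 2)) (div_nonneg zero_le_one (by linarith))
    (by rw [div_le_one] <;> linarith)
    (by rw [hsub, one_le_div hd]; exact hd1) (abs_div_sub_round_le_iSup a o hd)
    (by rwa [hsub])
  refine ⟨q, hq, fun i hi0 hik => ?_, by rwa [neg_div, ← hsub]⟩
  have hli : x l < x i := div_lt_div_of_pos_right (sub_lt_sub_right (hmono hi0) o) hd
  have hir : x i < x r := div_lt_div_of_pos_right (sub_lt_sub_right (hmono hik) o) hd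
  simpa only [hα, neg_div] using hint i hli hir
end

section
/- Let L ⊂ ℝ^{k−1} be the lattice generated by the standard basis vectors e₁, …, e_{k−2} and the vector (a₂, …, a_{k−1}, ε), where 0 = a₁ < a₂ < … < a_{k−1} < a_k = 1 and ε > 0. If b₁ is a nonzero vector of L satisfying |b₁|² ≤ 2^{k−2}·|x|² for all nonzero x ∈ L, then for every positive integer q' with q'·ε < 2^{1−k/2}·|b₁|/√k and all integers p₂', …, p_{k−1}', one has max_{2≤i≤k−1} |pᵢ' − q'·aᵢ| ≥ 2^{1−k/2}·|b₁|/√k. -/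
/-!
If every `|pᵢ' - q' aᵢ|` were below `T = 2^{1-k/2} ‖b₁‖ / √k`, the lattice vector
`x = ∑ pᵢ' e_{i-1} - q' v` would be nonzero, since its last coordinate is `-q' ε`, and all
its `k - 1` coordinates would be below `T` in absolute value. Then
`‖b₁‖² ≤ 2^{k-2} ‖x‖² < 2^{k-2} (k - 1) T² = (k - 1) / k · ‖b₁‖²`, which is absurd.
-/

section
variable {ι : Type*} [Fintype ι]

theorem EuclideanSpace.norm_sq_lt_card_mul_sq [Nonempty ι] {x : EuclideanSpace ℝ ι} {T : ℝ}
    (hx : ∀ i, |x i| < T) : ‖x‖ ^ 2 < Fintype.card ι * T ^ 2 := by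
  rw [EuclideanSpace.norm_sq_eq]
  calc ∑ i, ‖x i‖ ^ 2 < ∑ _i : ι, T ^ 2 :=
        Finset.sum_lt_sum_of_nonempty Finset.univ_nonempty fun i _ =>
          pow_lt_pow_left₀ (hx i) (abs_nonneg _) two_ne_zero
    _ = Fintype.card ι * T ^ 2 := by simp

theorem EuclideanSpace.toLp_intCast_mem_span_single [DecidableEq ι] {P : ι → Prop} (c : ι → ℤ)
    (hc : ∀ i, ¬ P i → c i = 0) :
    WithLp.toLp 2 (fun i => (c i : ℝ)) ∈
      Submodule.span ℤ {x | ∃ i, P i ∧ x = EuclideanSpace.single i (1 : ℝ)} := by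
  have hsum : WithLp.toLp 2 (fun i => (c i : ℝ)) = ∑ i, c i • EuclideanSpace.single i (1 : ℝ) := by
    ext j
    simp [Pi.single_apply]
  rw [hsum]
  refine Submodule.sum_mem _ fun i _ => ?_
  by_cases hi : P i
  · exact Submodule.smul_mem _ _ (Submodule.subset_span ⟨i, hi, rfl⟩)
  · simp [hc i hi]
end

theorem two_pow_mul_rpow_sq {k : ℕ} (hk : 2 ≤ k) (r : ℝ) :
    (2 : ℝ) ^ (k - 2) * ((2 : ℝ) ^ ((1 : ℝ) - k / 2) * r / √k) ^ 2 = r ^ 2 / k := by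
  have hk0 : (0 : ℝ) ≤ k := k.cast_nonneg
  have hpow : (2 : ℝ) ^ (k - 2) * ((2 : ℝ) ^ ((1 : ℝ) - k / 2)) ^ 2 = 1 := by
    rw [← Real.rpow_natCast, ← Real.rpow_natCast, ← Real.rpow_mul zero_le_two,
      ← Real.rpow_add two_pos]
    push_cast [Nat.cast_sub hk]
    ring_nf
    exact Real.rpow_zero 2
  rw [div_pow, mul_pow, Real.sq_sqrt hk0, ← mul_div_assoc, ← mul_assoc, hpow, one_mul]

/-- Theorem 2.5 (first part): if `b₁` is a nonzero lattice vector of the LLL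
lattice `L` with `‖b₁‖² ≤ 2^{k-2}‖x‖²` for all nonzero `x ∈ L`, then any `q'`
with `q'ε` below the threshold approximates badly:
`max_{2≤i≤k-1} |pᵢ' - q'aᵢ| ≥ 2^{1-k/2}‖b₁‖/√k`. -/
theorem lll_lower_bound (k : ℕ) (hk : 3 ≤ k) (a : Fin k → ℝ)
    (ε : ℝ) (hε : 0 < ε)
    (v : EuclideanSpace ℝ (Fin (k - 1)))
    (hv : ∀ j : Fin (k - 1), v j =
      if h : (j : ℕ) + 1 < k - 1 then a ⟨(j : ℕ) + 1, by omega⟩ else ε)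
    (L : Submodule ℤ (EuclideanSpace ℝ (Fin (k - 1))))
    (hL : L = Submodule.span ℤ
      (insert v {x | ∃ i : Fin (k - 1), (i : ℕ) < k - 2 ∧ x = EuclideanSpace.single i (1 : ℝ)}))
    (b₁ : EuclideanSpace ℝ (Fin (k - 1))) (hb₁ : b₁ ≠ 0)
    (hshort : ∀ x ∈ L, x ≠ 0 → ‖b₁‖ ^ 2 ≤ (2 : ℝ) ^ (k - 2) * ‖x‖ ^ 2)
    (q' : ℕ) (hq' : 0 < q')
    (hsmall : (q' : ℝ) * ε < (2 : ℝ) ^ ((1 : ℝ) - (k : ℝ) / 2) * ‖b₁‖ / Real.sqrt k)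
    (p : Fin k → ℤ) :
    ∃ i : Fin k, 0 < (i : ℕ) ∧ (i : ℕ) < k - 1 ∧
      |(p i : ℝ) - (q' : ℝ) * a i| ≥ (2 : ℝ) ^ ((1 : ℝ) - (k : ℝ) / 2) * ‖b₁‖ / Real.sqrt k := by
  by_contra! hclose
  set T := (2 : ℝ) ^ ((1 : ℝ) - (k : ℝ) / 2) * ‖b₁‖ / Real.sqrt k
  let c : Fin (k - 1) → ℤ := fun j => if h : (j : ℕ) + 1 < k - 1 then p ⟨j + 1, by omega⟩ else 0
  set x := WithLp.toLp 2 (fun j => (c j : ℝ)) - (q' : ℤ) • v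
  have hx_apply (j : Fin (k - 1)) : x j = c j - q' * v j := by simp [x]
  have hxL : x ∈ L := hL ▸ Submodule.sub_mem _
    (Submodule.span_mono (Set.subset_insert _ _)
      (EuclideanSpace.toLp_intCast_mem_span_single c fun j hj => dif_neg (by omega)))
    (Submodule.smul_mem _ _ (Submodule.subset_span (Set.mem_insert _ _)))
  have hx_last : x ⟨k - 2, by omega⟩ = -(q' * ε) := by
    simp [hx_apply, hv, c, show ¬ k - 2 + 1 < k - 1 by omega]
  have hx0 : x ≠ 0 := fun h => by
    have : x ⟨k - 2, by omega⟩ ≠ 0 := hx_last ▸ neg_ne_zero.mpr (by positivity)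
    simp [h] at this
  have hx_abs (j : Fin (k - 1)) : |x j| < T := by
    rw [hx_apply, hv]
    by_cases hj : (j : ℕ) + 1 < k - 1
    · simpa [c, hj] using hclose ⟨j + 1, by omega⟩ (by simp) (by simp [hj])
    · simpa [c, hj, abs_of_pos (by positivity : (0 : ℝ) < q' * ε)] using hsmall
  have : Nonempty (Fin (k - 1)) := ⟨⟨0, by omega⟩⟩
  have hx_norm := EuclideanSpace.norm_sq_lt_card_mul_sq hx_abs
  rw [Fintype.card_fin, Nat.cast_sub (by omega : 1 ≤ k), Nat.cast_one] at hx_norm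
  have hk0 : (0 : ℝ) < k := by positivity
  have hb : 0 < ‖b₁‖ ^ 2 := by positivity
  refine lt_irrefl (‖b₁‖ ^ 2) ?_
  calc ‖b₁‖ ^ 2 ≤ 2 ^ (k - 2) * ‖x‖ ^ 2 := hshort x hxL hx0
    _ < 2 ^ (k - 2) * ((k - 1) * T ^ 2) := by gcongr
    _ = (k - 1) * ‖b₁‖ ^ 2 / k := by
      rw [mul_left_comm, two_pow_mul_rpow_sq (by omega), mul_div_assoc]
    _ < ‖b₁‖ ^ 2 := by rw [div_lt_iff₀ hk0]; nlinarith
end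

section
/- Let γ > 0 and suppose max_{2≤i≤k−1} ‖q·aᵢ‖ ≥ γ·q^{−1/(k−2)} for every positive integer q, where k ≥ 4 and a₂, …, a_{k−1} ∈ (0,1). Let t ≥ 1 be real with nearest integer q, and suppose ‖t‖ < 2ε and ‖t·aᵢ‖ < 2ε for all i = 2, …, k−1, where ε = γ/(4·q^{1/(k−2)}). Then a contradiction follows; i.e., for this value of ε no such t exists. -/
/-- Core of Theorem 2.3: for a badly approximable family (Cassels' constant `γ`),
taking `ε = γ/(4 q^{1/(k-2)})` where `q` is the nearest integer to `t ≥ 1`, the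
inequalities `‖t‖ < 2ε` and `‖t aᵢ‖ < 2ε` for all `i = 2, …, k-1` are contradictory. -/
theorem badly_approx_contradiction (k : ℕ) (hk : 4 ≤ k) (a : Fin k → ℝ)
    (ha : ∀ i : Fin k, 0 < (i : ℕ) → (i : ℕ) < k - 1 → 0 < a i ∧ a i < 1)
    (γ : ℝ) (hγ : 0 < γ)
    (hbad : ∀ q : ℕ, 0 < q → ∃ i : Fin k, 0 < (i : ℕ) ∧ (i : ℕ) < k - 1 ∧
      |(q : ℝ) * a i - round ((q : ℝ) * a i)| ≥ γ * (q : ℝ) ^ (-(1 : ℝ) / ((k : ℝ) - 2)))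
    (t ε : ℝ) (ht : 1 ≤ t)
    (hε : ε = γ / (4 * ((round t : ℝ)) ^ ((1 : ℝ) / ((k : ℝ) - 2))))
    (h2 : |t - round t| < 2 * ε)
    (h1 : ∀ i : Fin k, 0 < (i : ℕ) → (i : ℕ) < k - 1 →
      |t * a i - round (t * a i)| < 2 * ε) :
    False := by
  have hq1 : (1 : ℤ) ≤ round t := by
    rw [round_eq, Int.le_floor]
    push_cast; linarith
  set q : ℤ := round t with hqdef
  have hqn : 0 < q.toNat := by omega
  obtain ⟨i, hi0, hik, hlb⟩ := hbad q.toNat hqn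
  have hcast : ((q.toNat : ℕ) : ℝ) = (q : ℝ) := by
    have : (q.toNat : ℤ) = q := Int.toNat_of_nonneg (by omega)
    exact_mod_cast this
  rw [hcast] at hlb
  have hqpos : (0 : ℝ) < (q : ℝ) := by exact_mod_cast hq1
  -- rewrite the lower bound as 4ε
  have hpowpos : (0 : ℝ) < (q : ℝ) ^ ((1 : ℝ) / ((k : ℝ) - 2)) :=
    Real.rpow_pos_of_pos hqpos _
  have hεpos : 0 < ε := by
    rw [hε]; positivity
  have hrw : γ * (q : ℝ) ^ (-(1 : ℝ) / ((k : ℝ) - 2)) = 4 * ε := by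
    rw [hε, neg_div, Real.rpow_neg hqpos.le]
    field_simp
  rw [hrw] at hlb
  have hai := ha i hi0 hik
  have hta := h1 i hi0 hik
  -- key chain
  have key1 : |(q : ℝ) * a i - round ((q : ℝ) * a i)| ≤ |(q : ℝ) * a i - round (t * a i)| :=
    round_le _ _
  have key2 : |(q : ℝ) * a i - round (t * a i)| ≤
      |t * a i - round (t * a i)| + |t - q| * a i := by
    have : (q : ℝ) * a i - round (t * a i) =
        (t * a i - round (t * a i)) - (t - q) * a i := by ring
    rw [this]
    calc |(t * a i - round (t * a i)) - (t - q) * a i| ≤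
        |t * a i - round (t * a i)| + |(t - q) * a i| := abs_sub _ _
      _ = |t * a i - round (t * a i)| + |t - q| * a i := by
          rw [abs_mul, abs_of_pos hai.1]
  have h2a : |t - (q : ℝ)| * a i < 2 * ε * 1 := by
    apply mul_lt_mul' (le_of_lt h2) hai.2 hai.1.le
    linarith
  linarith
end
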